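/- arXiv:1609.02107 — 3 statements merged into one kernel-verified Lean document; each statement's English description precedes it below -/
import Mathlib

section
/- Let K ≥ 1 and N ≥ 1 be integers and K_1,…,K_N nonnegative integers with Σ K_i = K. Define X_1 = {0} if K_1 = 0 and X_1 = {±(m − 1/2) : m = 1,…,2^{K_1−1}} if K_1 ≥ 1; for i ≥ 2, define X_i = {0} if K_i = 0 and X_i = {±(m − 1/2)·2^{Σ_{n<i} K_n} : m = 1,…,2^{K_i−1}} if K_i ≥ 1. Then the 2^K-ary PAM constellation G = {±(m − 1/2) : m = 1,…,2^{K−1}} equals the sumset of the X_i, and the decomposition is unique: every g ∈ G can be written in exactly one way as g = Σ_{i=1}^N x_i with x_i ∈ X_i. -/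
/-!
Recentre everything by half its spread: with `n i = 2 ^ K_i`, the level `X_i` is the digit set
`{0, …, n i - 1}`, shifted by `(n i - 1) / 2` and scaled by the weight `n 1 ⋯ n (i-1)`, while `G`
is `{0, …, 2 ^ K - 1}` shifted by `(2 ^ K - 1) / 2`. The shifts are compatible because
`∑ (n i - 1) · n 1 ⋯ n (i-1)` telescopes to `n 1 ⋯ n N - 1`, so the decomposition of `G` is exactly
the mixed-radix representation of the integers below `n 1 ⋯ n N` (`finPiFinEquiv`).
-/

open Finset

theorem Fin.prod_univ_castLE_eq_prod_Iio {M : Type*} [CommMonoid M] {m : ℕ} (f : Fin m → M)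
    (i : Fin m) : ∏ j : Fin i, f (Fin.castLE i.is_lt.le j) = ∏ j < i, f j := by
  refine prod_nbij (Fin.castLE i.is_lt.le) (fun j _ => ?_) (fun j _ k _ h => ?_)
    (fun j hj => ?_) (fun _ _ => rfl)
  · simp [Fin.lt_def]
  · exact Fin.castLE_injective _ h
  · simp only [coe_Iio, Set.mem_Iio] at hj
    exact ⟨⟨j, hj⟩, by simp, rfl⟩

theorem Fin.sum_sub_one_mul_prod_Iio {R : Type*} [CommRing R] {m : ℕ} (n : Fin m → R) :
    ∑ i, (n i - 1) * ∏ j < i, n j = ∏ i, n i - 1 := by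
  induction m with
  | zero => simp
  | succ m ih =>
    rw [Fin.sum_univ_castSucc, Fin.prod_univ_castSucc]
    simp only [Fin.prod_Iio_castSucc, ih, Fin.Iio_last_eq_map, prod_map, Fin.coe_castSuccEmb]
    ring

section CenteredDigit

variable (F : Type*) [Field F] [CharZero F]

def centeredDigit (n a : ℕ) : F := a - ((n : F) - 1) / 2

theorem centeredDigit_injective (n : ℕ) : Function.Injective (centeredDigit F n) := by
  intro a b h
  simpa [centeredDigit] using h

variable {F}

theorem sum_centeredDigit_mul_prod_Iio {m : ℕ} (n : Fin m → ℕ) (a : ∀ i, Fin (n i)) :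
    ∑ i, centeredDigit F (n i) (a i) * ∏ j < i, (n j : F) =
      centeredDigit F (∏ i, n i) (finPiFinEquiv a) := by
  simp only [centeredDigit, finPiFinEquiv_apply, Fin.prod_univ_castLE_eq_prod_Iio]
  push_cast
  rw [← Fin.sum_sub_one_mul_prod_Iio, sum_div, ← sum_sub_distrib]
  exact sum_congr rfl fun i _ => by ring

theorem bijOn_sum_pi_range_centeredDigit {m : ℕ} (n : Fin m → ℕ) :
    Set.BijOn (fun f : Fin m → F => ∑ i, f i)
      (Set.univ.pi fun i => Set.range fun a : Fin (n i) =>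
        centeredDigit F (n i) a * ∏ j < i, (n j : F))
      (Set.range fun t : Fin (∏ i, n i) => centeredDigit F (∏ i, n i) t) := by
  set digits := Pi.map fun i (a : Fin (n i)) => centeredDigit F (n i) a * ∏ j < i, (n j : F)
  have hsum : (fun f : Fin m → F => ∑ i, f i) ∘ digits =
      (fun t : Fin (∏ i, n i) => centeredDigit F (∏ i, n i) t) ∘ finPiFinEquiv :=
    funext (sum_centeredDigit_mul_prod_Iio n)
  have hinj : Function.Injective ((fun f : Fin m → F => ∑ i, f i) ∘ digits) := by
    rw [hsum]
    exact ((centeredDigit_injective F _).comp Fin.val_injective).comp finPiFinEquiv.injective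
  rw [← Set.range_piMap]
  convert hinj.injOn_range.bijOn_image
  rw [← Set.range_comp, hsum, finPiFinEquiv.surjective.range_comp]

theorem range_centeredDigit_two_pow_mul (k : ℕ) (c : F) :
    (Set.range fun a : Fin (2 ^ k) => centeredDigit F (2 ^ k) a * c) =
      if k = 0 then {0}
      else {x | ∃ m : ℕ, 1 ≤ m ∧ m ≤ 2 ^ (k - 1) ∧
        (x = ((m : F) - 1/2) * c ∨ x = -(((m : F) - 1/2) * c))} := by
  rcases k with _ | j
  · simp [centeredDigit]
  have hdigit (a : ℕ) : centeredDigit F (2 ^ (j + 1)) a = a - 2 ^ j + 1/2 := by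
    simp only [centeredDigit]; push_cast; ring
  ext x
  simp only [Nat.add_one_ne_zero, if_false, Nat.add_sub_cancel, Set.mem_range, Set.mem_ofPred_eq,
    hdigit]
  constructor
  · rintro ⟨a, rfl⟩
    have ha : (a : ℕ) < 2 ^ j * 2 := pow_succ 2 j ▸ a.is_lt
    rcases le_or_gt (2 ^ j) (a : ℕ) with h | h
    · refine ⟨a + 1 - 2 ^ j, by omega, by omega, Or.inl ?_⟩
      rw [Nat.cast_sub (by omega)]; push_cast; ring
    · refine ⟨2 ^ j - a, by omega, by omega, Or.inr ?_⟩
      rw [Nat.cast_sub h.le]; push_cast; ring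
  · rintro ⟨m, hm1, hmj, rfl | rfl⟩
    · refine ⟨⟨m - 1 + 2 ^ j, by rw [pow_succ]; omega⟩, ?_⟩
      rw [Nat.cast_add, Nat.cast_sub hm1]; push_cast; ring
    · refine ⟨⟨2 ^ j - m, by rw [pow_succ]; omega⟩, ?_⟩
      rw [Nat.cast_sub hmj]; push_cast; ring

end CenteredDigit

theorem stmt1_general (N K : ℕ) (hK : 1 ≤ K)
    (Ki : Fin N → ℕ) (hsum : ∑ i, Ki i = K)
    (X : Fin N → Set ℚ)
    (hX : ∀ i, X i =
      if Ki i = 0 then {0}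
      else {x : ℚ | ∃ m : ℕ, 1 ≤ m ∧ m ≤ 2 ^ (Ki i - 1) ∧
        (x = ((m : ℚ) - 1/2) * 2 ^ (∑ n ∈ Finset.Iio i, Ki n) ∨
         x = -(((m : ℚ) - 1/2) * 2 ^ (∑ n ∈ Finset.Iio i, Ki n)))})
    (G : Set ℚ)
    (hG : G = {x : ℚ | ∃ m : ℕ, 1 ≤ m ∧ m ≤ 2 ^ (K - 1) ∧
      (x = (m : ℚ) - 1/2 ∨ x = -((m : ℚ) - 1/2))}) :
    G = {x : ℚ | ∃ f : Fin N → ℚ, (∀ i, f i ∈ X i) ∧ x = ∑ i, f i} ∧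
    ∀ g ∈ G, ∃! f : {f : Fin N → ℚ // ∀ i, f i ∈ X i}, ∑ i, f.1 i = g := by
  have hweight (i : Fin N) : ∏ j < i, ((2 ^ Ki j : ℕ) : ℚ) = 2 ^ (∑ n ∈ Iio i, Ki n) := by
    push_cast; exact prod_pow_eq_pow_sum _ _ _
  have hX' : X = fun i => Set.range fun a : Fin (2 ^ Ki i) =>
      centeredDigit ℚ (2 ^ Ki i) a * ∏ j < i, ((2 ^ Ki j : ℕ) : ℚ) := by
    funext i
    rw [hweight, range_centeredDigit_two_pow_mul, hX]
  have hG' : G = Set.range fun t : Fin (∏ i, 2 ^ Ki i) => centeredDigit ℚ (∏ i, 2 ^ Ki i) t := by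
    have h := range_centeredDigit_two_pow_mul K (1 : ℚ)
    simp only [mul_one, if_neg (by omega : K ≠ 0)] at h
    rw [prod_pow_eq_pow_sum, hsum, h, hG]
  have hbij := bijOn_sum_pi_range_centeredDigit (F := ℚ) fun i => 2 ^ Ki i
  rw [← hX', ← hG'] at hbij
  refine ⟨?_, fun g hg => ?_⟩
  · rw [← hbij.image_eq]
    ext x
    simp [eq_comm]
  · obtain ⟨f, hf, rfl⟩ := hbij.surjOn hg
    exact ⟨⟨f, Set.mem_univ_pi.mp hf⟩, rfl, fun f' hf' =>
      Subtype.ext (hbij.injOn (Set.mem_univ_pi.mpr f'.2) hf hf')⟩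

theorem stmt1 (N K : ℕ) (hN : 1 ≤ N) (hK : 1 ≤ K)
    (Ki : Fin N → ℕ) (hsum : ∑ i, Ki i = K)
    (X : Fin N → Set ℚ)
    (hX : ∀ i, X i =
      if Ki i = 0 then {0}
      else {x : ℚ | ∃ m : ℕ, 1 ≤ m ∧ m ≤ 2 ^ (Ki i - 1) ∧
        (x = ((m : ℚ) - 1/2) * 2 ^ (∑ n ∈ Finset.Iio i, Ki n) ∨
         x = -(((m : ℚ) - 1/2) * 2 ^ (∑ n ∈ Finset.Iio i, Ki n)))})
    (G : Set ℚ)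
    (hG : G = {x : ℚ | ∃ m : ℕ, 1 ≤ m ∧ m ≤ 2 ^ (K - 1) ∧
      (x = (m : ℚ) - 1/2 ∨ x = -((m : ℚ) - 1/2))}) :
    G = {x : ℚ | ∃ f : Fin N → ℚ, (∀ i, f i ∈ X i) ∧ x = ∑ i, f i} ∧
    ∀ g ∈ G, ∃! f : {f : Fin N → ℚ // ∀ i, f i ∈ X i}, ∑ i, f.1 i = g :=
  stmt1_general N K hK Ki hsum X hX G hG
end

section
/- For integers K ≥ 1 and K_1 with 1 ≤ K_1 ≤ K, and for any element g of the 2^K-ary PAM constellation G = {±(m − 1/2) : m = 1,…,2^{K−1}}, if g = Σ_{i=1}^N x_i is the unique decomposition of g with respect to the PAM UDCG of Theorem 1 (rate allocation K_1,…,K_N), then x_1 = ((g + (2^K − 1)/2) mod 2^{K_1}) − (2^{K_1} − 1)/2. -/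
theorem stmt2 (N K : ℕ) (hN : 1 ≤ N) (hK : 1 ≤ K)
    (Ki : Fin N → ℕ) (hsum : ∑ i, Ki i = K) (hK1 : 1 ≤ Ki ⟨0, hN⟩)
    (X : Fin N → Set ℚ)
    (hX : ∀ i, X i =
      if Ki i = 0 then {0}
      else {x : ℚ | ∃ m : ℕ, 1 ≤ m ∧ m ≤ 2 ^ (Ki i - 1) ∧
        (x = ((m : ℚ) - 1/2) * 2 ^ (∑ n ∈ Finset.Iio i, Ki n) ∨
         x = -(((m : ℚ) - 1/2) * 2 ^ (∑ n ∈ Finset.Iio i, Ki n)))})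
    (G : Set ℚ)
    (hG : G = {x : ℚ | ∃ m : ℕ, 1 ≤ m ∧ m ≤ 2 ^ (K - 1) ∧
      (x = (m : ℚ) - 1/2 ∨ x = -((m : ℚ) - 1/2))})
    (g : ℚ) (hg : g ∈ G)
    (x : Fin N → ℚ) (hx : ∀ i, x i ∈ X i) (hxg : ∑ i, x i = g) :
    x ⟨0, hN⟩ =
      ((g + (2 ^ K - 1) / 2) -
        2 ^ Ki ⟨0, hN⟩ * ⌊(g + (2 ^ K - 1) / 2) / 2 ^ Ki ⟨0, hN⟩⌋) -
      (2 ^ Ki ⟨0, hN⟩ - 1) / 2 := by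
  classical
  -- Step 1: digit extraction
  have hdig : ∀ i : Fin N, ∃ a : ℕ, a < 2 ^ Ki i ∧
      x i = (a : ℚ) * 2 ^ (∑ n ∈ Finset.Iio i, Ki n)
            - ((2:ℚ) ^ Ki i - 1) / 2 * 2 ^ (∑ n ∈ Finset.Iio i, Ki n) := by
    intro i
    have hxi := hx i
    rw [hX i] at hxi
    by_cases h0 : Ki i = 0
    · rw [if_pos h0] at hxi
      refine ⟨0, by simp, ?_⟩
      simp only [Set.mem_singleton_iff] at hxi
      simp [hxi, h0]
    · rw [if_neg h0] at hxi
      obtain ⟨m, hm1, hm2, hcase⟩ := hxi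
      have hpow : (2:ℚ) ^ Ki i = 2 * 2 ^ (Ki i - 1) := by
        rw [← pow_succ']
        congr 1
        omega
      have hpown : 2 ^ Ki i = 2 * 2 ^ (Ki i - 1) := by
        rw [← pow_succ']
        congr 1
        omega
      rcases hcase with h | h
      · refine ⟨m + 2 ^ (Ki i - 1) - 1, by omega, ?_⟩
        rw [h]
        have : ((m + 2 ^ (Ki i - 1) - 1 : ℕ) : ℚ)
            = (m : ℚ) + 2 ^ (Ki i - 1) - 1 := by
          have h1 : 1 ≤ m + 2 ^ (Ki i - 1) := le_trans hm1 (Nat.le_add_right _ _)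
          push_cast [Nat.cast_sub h1]
          ring
        rw [this, hpow]
        ring
      · refine ⟨2 ^ (Ki i - 1) - m, by omega, ?_⟩
        rw [h]
        have : ((2 ^ (Ki i - 1) - m : ℕ) : ℚ) = (2:ℚ) ^ (Ki i - 1) - m := by
          push_cast [Nat.cast_sub hm2]
          ring
        rw [this, hpow]
        ring
  choose a ha1 ha2 using hdig
  -- extended rate function on ℕ
  set k' : ℕ → ℕ := fun n => if h : n < N then Ki ⟨n, h⟩ else 0 with hk'
  have hIio : ∀ i : Fin N, (∑ n ∈ Finset.Iio i, Ki n)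
      = ∑ n ∈ Finset.range i.val, k' n := by
    intro i
    rw [← Nat.Iio_eq_range, ← Fin.map_valEmbedding_Iio, Finset.sum_map]
    refine Finset.sum_congr rfl fun n _ => ?_
    simp [hk', n.isLt]
  have htot : ∑ n ∈ Finset.range N, k' n = K := by
    rw [← hsum, ← Fin.sum_univ_eq_sum_range]
    exact Finset.sum_congr rfl fun i _ => by simp [hk', i.isLt]
  -- telescoping
  have htel : ∑ i : Fin N, ((2:ℚ) ^ Ki i - 1) * 2 ^ (∑ n ∈ Finset.Iio i, Ki n)
      = 2 ^ K - 1 := by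
    have : ∀ i : Fin N, ((2:ℚ) ^ Ki i - 1) * 2 ^ (∑ n ∈ Finset.Iio i, Ki n)
        = (fun j => (2:ℚ) ^ (∑ n ∈ Finset.range j, k' n)) (i.val + 1)
          - (fun j => (2:ℚ) ^ (∑ n ∈ Finset.range j, k' n)) i.val := by
      intro i
      simp only [hIio i, Finset.sum_range_succ]
      have : k' i.val = Ki i := by simp [hk', i.isLt]
      rw [pow_add, this]
      ring
    rw [Finset.sum_congr rfl fun i _ => this i]
    rw [Fin.sum_univ_eq_sum_range
      (fun j => (fun j => (2:ℚ) ^ (∑ n ∈ Finset.range j, k' n)) (j + 1)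
          - (fun j => (2:ℚ) ^ (∑ n ∈ Finset.range j, k' n)) j) N]
    rw [Finset.sum_range_sub (fun j => (2:ℚ) ^ (∑ n ∈ Finset.range j, k' n))]
    simp [htot]
  -- the integer M
  set Mn : ℕ := ∑ i : Fin N, a i * 2 ^ (∑ n ∈ Finset.Iio i, Ki n) with hMn
  have ht : g + ((2:ℚ) ^ K - 1) / 2 = (Mn : ℚ) := by
    rw [← hxg]
    rw [Finset.sum_congr rfl fun i _ => ha2 i]
    rw [Finset.sum_sub_distrib]
    have h2 : ∑ i : Fin N, ((2:ℚ) ^ Ki i - 1) / 2 * 2 ^ (∑ n ∈ Finset.Iio i, Ki n)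
        = (2 ^ K - 1) / 2 := by
      rw [← htel, Finset.sum_div]
      exact Finset.sum_congr rfl fun i _ => by ring
    rw [h2, hMn]
    push_cast
    ring
  -- N = N' + 1
  obtain ⟨N', rfl⟩ : ∃ N', N = N' + 1 := ⟨N - 1, by omega⟩
  have hi0 : (⟨0, hN⟩ : Fin (N' + 1)) = 0 := rfl
  rw [hi0] at hK1 ⊢
  -- mod computation
  have hmod : Mn % 2 ^ Ki 0 = a 0 := by
    have hsplit : Mn = a 0 + ∑ i : Fin N',
        a i.succ * 2 ^ (∑ n ∈ Finset.Iio i.succ, Ki n) := by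
      rw [hMn, Fin.sum_univ_succ]
      have hIio0 : Finset.Iio (0 : Fin (N' + 1)) = ∅ := by
        ext n; simp [Fin.pos_iff_ne_zero]
      rw [hIio0]
      simp
    have hdvd : 2 ^ Ki 0 ∣ ∑ i : Fin N',
        a i.succ * 2 ^ (∑ n ∈ Finset.Iio i.succ, Ki n) := by
      refine Finset.dvd_sum fun i _ => Dvd.dvd.mul_left ?_ _
      refine pow_dvd_pow 2 ?_
      calc Ki 0 ≤ ∑ n ∈ Finset.Iio i.succ, Ki n := by
            refine Finset.single_le_sum (fun n _ => Nat.zero_le _) ?_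
            simp [Fin.lt_def]
      _ = _ := rfl
    obtain ⟨c, hc⟩ := hdvd
    rw [hsplit, hc, Nat.add_mul_mod_self_left, Nat.mod_eq_of_lt (ha1 0)]
  -- floor computation
  have hfloor : ⌊(g + ((2:ℚ) ^ K - 1) / 2) / 2 ^ Ki 0⌋ = ((Mn / 2 ^ Ki 0 : ℕ) : ℤ) := by
    rw [ht]
    have : ((Mn : ℚ)) / 2 ^ Ki 0 = ((Mn : ℤ) : ℚ) / ((2 ^ Ki 0 : ℕ) : ℚ) := by
      push_cast; ring
    rw [this, Rat.floor_intCast_div_natCast, ← Int.natCast_div]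
  rw [ht] at hfloor ⊢
  rw [hfloor]
  rw [ha2 0]
  have hIio0 : Finset.Iio (0 : Fin (N' + 1)) = ∅ := by
    ext n; simp [Fin.pos_iff_ne_zero]
  rw [hIio0]
  have hdm := Nat.div_add_mod Mn (2 ^ Ki 0)
  have hdmQ : (Mn : ℚ) = 2 ^ Ki 0 * ((Mn / 2 ^ Ki 0 : ℕ) : ℚ) + ((Mn % 2 ^ Ki 0 : ℕ) : ℚ) := by
    exact_mod_cast hdm.symm
  rw [hmod] at hdmQ
  rw [Finset.sum_empty, Int.cast_natCast, hdmQ]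
  ring
end

section
/- Let h_1, h_2 ∈ ℂ^M with h_1 = τ h_2 for some τ ∈ ℂ with |τ| ≥ 1, h_2 ≠ 0, and P > 0. Then max over w^H w = P of min{|h_1^H w|², |h_2^H w|²} equals P‖h_2‖², attained at w = √P h_2/‖h_2‖. -/
/-! Since `h₁ = τ h₂` with `|τ| ≥ 1`, the weaker user is always user 2, so the max-min problem
reduces to maximising `|h₂ᴴ w|²` over `‖w‖² = P`. By Cauchy–Schwarz this is at most `P ‖h₂‖²`,
with equality for the matched filter `w = √P h₂ / ‖h₂‖`. -/

open scoped InnerProductSpace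

section

variable {𝕜 E : Type*} [RCLike 𝕜] [NormedAddCommGroup E] [InnerProductSpace 𝕜 E]

theorem norm_inner_le_norm_inner_smul_left {τ : 𝕜} (hτ : 1 ≤ ‖τ‖) (h w : E) :
    ‖⟪h, w⟫_𝕜‖ ≤ ‖⟪τ • h, w⟫_𝕜‖ := by
  rw [inner_smul_left, norm_mul, RCLike.norm_conj]
  exact le_mul_of_one_le_left (norm_nonneg _) hτ

theorem min_sq_norm_inner_smul_left {τ : 𝕜} (hτ : 1 ≤ ‖τ‖) (h w : E) :
    min (‖⟪τ • h, w⟫_𝕜‖ ^ 2) (‖⟪h, w⟫_𝕜‖ ^ 2) = ‖⟪h, w⟫_𝕜‖ ^ 2 :=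
  min_eq_right (pow_le_pow_left₀ (norm_nonneg _) (norm_inner_le_norm_inner_smul_left hτ h w) 2)

theorem norm_inner_smul_self_right (c : 𝕜) (h : E) : ‖⟪h, c • h⟫_𝕜‖ = ‖h‖ * ‖c • h‖ := by
  rw [inner_smul_right, inner_self_eq_norm_sq_to_K, norm_mul, norm_pow, RCLike.norm_ofReal,
    abs_norm, norm_smul]
  ring

theorem sq_norm_smul_sqrt_div_norm {h : E} (hh : h ≠ 0) {P : ℝ} (hP : 0 ≤ P) :
    ‖((√P / ‖h‖ : ℝ) : 𝕜) • h‖ ^ 2 = P := by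
  rw [norm_smul, RCLike.norm_ofReal, abs_of_nonneg (by positivity),
    div_mul_cancel₀ _ (norm_ne_zero_iff.mpr hh), Real.sq_sqrt hP]

theorem sq_norm_inner_smul_sqrt_div_norm {h : E} (hh : h ≠ 0) {P : ℝ} (hP : 0 ≤ P) :
    ‖⟪h, ((√P / ‖h‖ : ℝ) : 𝕜) • h⟫_𝕜‖ ^ 2 = P * ‖h‖ ^ 2 := by
  rw [norm_inner_smul_self_right, mul_pow, sq_norm_smul_sqrt_div_norm hh hP, mul_comm]

theorem isGreatest_sq_norm_inner_of_sq_norm_eq {h : E} (hh : h ≠ 0) {P : ℝ} (hP : 0 ≤ P) :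
    IsGreatest {x : ℝ | ∃ w : E, ‖w‖ ^ 2 = P ∧ x = ‖⟪h, w⟫_𝕜‖ ^ 2} (P * ‖h‖ ^ 2) := by
  refine ⟨⟨_, sq_norm_smul_sqrt_div_norm hh hP, (sq_norm_inner_smul_sqrt_div_norm hh hP).symm⟩, ?_⟩
  rintro x ⟨w, hw, rfl⟩
  calc ‖⟪h, w⟫_𝕜‖ ^ 2 ≤ (‖h‖ * ‖w‖) ^ 2 :=
        pow_le_pow_left₀ (norm_nonneg _) (norm_inner_le_norm h w) 2
    _ = P * ‖h‖ ^ 2 := by rw [mul_pow, hw, mul_comm]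

end

theorem stmt7 (M : ℕ) (h1 h2 : EuclideanSpace ℂ (Fin M)) (τ : ℂ)
    (hτ : 1 ≤ ‖τ‖) (hdep : h1 = τ • h2) (hh2 : h2 ≠ 0)
    (P : ℝ) (hP : 0 < P) :
    IsGreatest {x : ℝ | ∃ w : EuclideanSpace ℂ (Fin M), ‖w‖ ^ 2 = P ∧
        x = min (‖(inner ℂ h1 w : ℂ)‖ ^ 2) (‖(inner ℂ h2 w : ℂ)‖ ^ 2)} (P * ‖h2‖ ^ 2) ∧
      min (‖(inner ℂ h1 ((((Real.sqrt P / ‖h2‖ : ℝ) : ℂ)) • h2) : ℂ)‖ ^ 2)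
          (‖(inner ℂ h2 ((((Real.sqrt P / ‖h2‖ : ℝ) : ℂ)) • h2) : ℂ)‖ ^ 2)
        = P * ‖h2‖ ^ 2 := by
  subst hdep
  simp only [min_sq_norm_inner_smul_left hτ]
  exact ⟨isGreatest_sq_norm_inner_of_sq_norm_eq hh2 hP.le,
    sq_norm_inner_smul_sqrt_div_norm hh2 hP.le⟩
end
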